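/- arXiv:2503.14699 — 3 statements merged into one kernel-verified Lean document; each statement's English description precedes it below -/
import Mathlib

section
/- Let $f(t)$, $h_1(t)$, $h_2(t)$ be non-negative continuous functions on $[t_0,\infty)$, let $a(t)$, $b_1(t)$, $b_2(t)$ be non-negative, non-decreasing continuous functions on $[t_0,\infty)$, and let $p>1$. Suppose that for all $t\geq t_0$, $f(t)\leq a(t)+b_1(t)\int_{t_0}^t h_1(s)f(s)\,ds+\big(b_2(t)\int_{t_0}^t h_2(s)f(s)^p\,ds\big)^{1/p}$. Then for any constant $C_6>0$ with $C_6^{-1}+(C_6 p)^{-1/p}<1$, one has $f(t)\leq C_6\,a(t)\exp\big(C_6\big(b_1(t)\int_{t_0}^t h_1(s)\,ds+b_2(t)\int_{t_0}^t h_2(s)\,ds\big)\big)$ for all $t\geq t_0$. -/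
open MeasureTheory Set Real

/-!
Fix `T`. As `a, b₁, b₂` are non-decreasing, on `[t₀, T]` the hypothesis still holds with the
coefficients frozen at `T`, i.e. `f ≤ a + ∫ k₁ f + (∫ k₂ f^p)^{1/p}` with `kᵢ = bᵢ(T) hᵢ`.
Compare `f` with the barrier `G(t) = C a exp(C ∫_{t₀}^t (k₁ + k₂))`. As long as `f ≤ G` on
`[t₀, t)`, the identity `∫_{t₀}^t c w e^{c W} = e^{c W(t)} - 1` (`W' = w`, `W(t₀) = 0`) bounds the
linear term by `G(t)/C - a` and the power term by `(C p)^{-1/p} G(t)`, so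
`f(t) ≤ (C⁻¹ + (C p)^{-1/p}) G(t) < G(t)`: `f` can never reach `G`. The strict inequality needs
`a > 0`; the case `a = 0` follows by letting `a` decrease.
-/

theorem continuousOn_primitive_Icc {w : ℝ → ℝ} {a b : ℝ} (hab : a ≤ b)
    (hw : ContinuousOn w (Icc a b)) : ContinuousOn (fun s => ∫ r in a..s, w r) (Icc a b) := by
  have := intervalIntegral.continuousOn_primitive_interval (μ := volume) (a := a) (b := b)
    (f := w) (by rw [uIcc_of_le hab]; exact hw.integrableOn_Icc)
  rwa [uIcc_of_le hab] at this

theorem continuousOn_exp_mul_primitive {w : ℝ → ℝ} {a b : ℝ} (hab : a ≤ b)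
    (hw : ContinuousOn w (Icc a b)) (c : ℝ) :
    ContinuousOn (fun s => exp (c * ∫ r in a..s, w r)) (Icc a b) :=
  continuous_exp.comp_continuousOn (continuousOn_const.mul (continuousOn_primitive_Icc hab hw))

theorem integral_mul_exp_primitive {w : ℝ → ℝ} {a b : ℝ} (hab : a ≤ b)
    (hw : ContinuousOn w (Icc a b)) (c : ℝ) :
    ∫ s in a..b, c * w s * exp (c * ∫ r in a..s, w r) = exp (c * ∫ r in a..b, w r) - 1 := by
  have hexp := continuousOn_exp_mul_primitive hab hw c
  have hderiv : ∀ x ∈ Ioo a b, HasDerivAt (fun s => exp (c * ∫ r in a..s, w r))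
      (c * w x * exp (c * ∫ r in a..x, w r)) x := by
    intro x hx
    have hWx : HasDerivAt (fun s => ∫ r in a..s, w r) (w x) x :=
      intervalIntegral.integral_hasDerivAt_right
        ((hw.mono (Icc_subset_Icc_right hx.2.le)).intervalIntegrable_of_Icc hx.1.le)
        ((hw.mono Ioo_subset_Icc_self).stronglyMeasurableAtFilter isOpen_Ioo x hx)
        (hw.continuousAt (Icc_mem_nhds hx.1 hx.2))
    simpa only [mul_comm] using (hWx.const_mul c).exp
  simpa using intervalIntegral.integral_eq_sub_of_hasDerivAt_of_le hab hexp hderiv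
    (((continuousOn_const.mul hw).mul hexp).intervalIntegrable_of_Icc hab)

section Barrier

variable {k w f : ℝ → ℝ} {t0 t a C : ℝ}

theorem integral_mul_le_of_le_barrier (ht : t0 ≤ t) (hk : ContinuousOn k (Icc t0 t))
    (hw : ContinuousOn w (Icc t0 t)) (hf : ContinuousOn f (Icc t0 t))
    (hk_nonneg : ∀ s ∈ Icc t0 t, 0 ≤ k s) (hkw : ∀ s ∈ Icc t0 t, k s ≤ w s)
    (ha : 0 ≤ a) (hC : 0 ≤ C)
    (hfg : ∀ s ∈ Ico t0 t, f s ≤ C * a * exp (C * ∫ r in t0..s, w r)) :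
    ∫ s in t0..t, k s * f s ≤ a * (exp (C * ∫ r in t0..t, w r) - 1) := by
  have hexp := continuousOn_exp_mul_primitive ht hw C
  calc ∫ s in t0..t, k s * f s
      ≤ ∫ s in t0..t, a * (C * w s * exp (C * ∫ r in t0..s, w r)) := by
        refine intervalIntegral.integral_mono_on_of_le_Ioo ht
          ((hk.mul hf).intervalIntegrable_of_Icc ht)
          ((continuousOn_const.mul ((continuousOn_const.mul hw).mul hexp)).intervalIntegrable_of_Icc
            ht) fun s hs => ?_
        have hs' : s ∈ Icc t0 t := Ioo_subset_Icc_self hs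
        calc k s * f s ≤ k s * (C * a * exp (C * ∫ r in t0..s, w r)) :=
              mul_le_mul_of_nonneg_left (hfg s (Ioo_subset_Ico_self hs)) (hk_nonneg s hs')
          _ ≤ w s * (C * a * exp (C * ∫ r in t0..s, w r)) :=
              mul_le_mul_of_nonneg_right (hkw s hs') (by positivity)
          _ = a * (C * w s * exp (C * ∫ r in t0..s, w r)) := by ring
    _ = a * (exp (C * ∫ r in t0..t, w r) - 1) := by
      rw [intervalIntegral.integral_const_mul, integral_mul_exp_primitive ht hw]

theorem integral_mul_rpow_le_of_le_barrier {p : ℝ} (ht : t0 ≤ t)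
    (hk : ContinuousOn k (Icc t0 t)) (hw : ContinuousOn w (Icc t0 t))
    (hf : ContinuousOn f (Icc t0 t))
    (hk_nonneg : ∀ s ∈ Icc t0 t, 0 ≤ k s) (hkw : ∀ s ∈ Icc t0 t, k s ≤ w s)
    (hf_nonneg : ∀ s ∈ Icc t0 t, 0 ≤ f s) (ha : 0 ≤ a) (hC : 0 < C) (hp : 0 < p)
    (hfg : ∀ s ∈ Ico t0 t, f s ≤ C * a * exp (C * ∫ r in t0..s, w r)) :
    ∫ s in t0..t, k s * f s ^ p ≤ (C * a * exp (C * ∫ r in t0..t, w r)) ^ p / (C * p) := by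
  have hbarrier_rpow (x : ℝ) : (C * a * exp x) ^ p = (C * a) ^ p * exp (p * x) := by
    rw [mul_rpow (by positivity) (exp_pos x).le, ← exp_mul, mul_comm x]
  have hexp := continuousOn_exp_mul_primitive ht hw (C * p)
  calc ∫ s in t0..t, k s * f s ^ p
      ≤ ∫ s in t0..t,
          (C * a) ^ p / (C * p) * ((C * p) * w s * exp ((C * p) * ∫ r in t0..s, w r)) := by
        refine intervalIntegral.integral_mono_on_of_le_Ioo ht
          ((hk.mul (hf.rpow_const fun _ _ => Or.inr hp.le)).intervalIntegrable_of_Icc ht)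
          ((continuousOn_const.mul ((continuousOn_const.mul hw).mul hexp)).intervalIntegrable_of_Icc
            ht) fun s hs => ?_
        have hs' : s ∈ Icc t0 t := Ioo_subset_Icc_self hs
        calc k s * f s ^ p ≤ k s * (C * a * exp (C * ∫ r in t0..s, w r)) ^ p :=
              mul_le_mul_of_nonneg_left
                (rpow_le_rpow (hf_nonneg s hs') (hfg s (Ioo_subset_Ico_self hs)) hp.le)
                (hk_nonneg s hs')
          _ ≤ w s * (C * a * exp (C * ∫ r in t0..s, w r)) ^ p :=
              mul_le_mul_of_nonneg_right (hkw s hs') (by positivity)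
          _ = (C * a) ^ p / (C * p) * ((C * p) * w s * exp ((C * p) * ∫ r in t0..s, w r)) := by
              rw [hbarrier_rpow]
              field_simp
    _ = (C * a) ^ p / (C * p) * (exp ((C * p) * ∫ r in t0..t, w r) - 1) := by
      rw [intervalIntegral.integral_const_mul, integral_mul_exp_primitive ht hw]
    _ ≤ (C * a) ^ p / (C * p) * exp ((C * p) * ∫ r in t0..t, w r) := by
      gcongr
      linarith
    _ = (C * a * exp (C * ∫ r in t0..t, w r)) ^ p / (C * p) := by
      rw [hbarrier_rpow]
      ring_nf

end Barrier

theorem forall_lt_on_Icc_of_first_crossing {f g : ℝ → ℝ} {a b : ℝ}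
    (hf : ContinuousOn f (Icc a b)) (hg : ContinuousOn g (Icc a b))
    (step : ∀ t ∈ Icc a b, (∀ s ∈ Ico a t, f s ≤ g s) → f t < g t) :
    ∀ t ∈ Icc a b, f t < g t := by
  by_contra! hcross
  obtain ⟨t, ht, hgf⟩ := hcross
  set S := Icc a b ∩ (g - f) ⁻¹' Iic 0
  have hS_closed : IsClosed S :=
    (hg.sub hf).preimage_isClosed_of_isClosed isClosed_Icc isClosed_Iic
  have hS_bdd : BddBelow S := ⟨a, fun x hx => hx.1.1⟩
  have hmem : sInf S ∈ S :=
    hS_closed.csInf_mem ⟨t, ht, by simpa [sub_nonpos] using hgf⟩ hS_bdd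
  refine (step (sInf S) hmem.1 fun s hs => ?_).not_ge (by simpa [sub_nonpos] using hmem.2)
  by_contra! hlt
  have hsS : s ∈ S := ⟨⟨hs.1, hs.2.le.trans hmem.1.2⟩, by simpa using hlt.le⟩
  exact (csInf_le hS_bdd hsS).not_gt hs.2

theorem lt_barrier_of_integral_ineq {k1 k2 f : ℝ → ℝ} {t0 T a C p : ℝ} (hT : t0 ≤ T)
    (hk1 : ContinuousOn k1 (Icc t0 T)) (hk2 : ContinuousOn k2 (Icc t0 T))
    (hf : ContinuousOn f (Icc t0 T)) (hk1_nonneg : ∀ s ∈ Icc t0 T, 0 ≤ k1 s)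
    (hk2_nonneg : ∀ s ∈ Icc t0 T, 0 ≤ k2 s) (hf_nonneg : ∀ s ∈ Icc t0 T, 0 ≤ f s)
    (ha : 0 < a) (hC : 0 < C) (hp : 0 < p) (hCp : C⁻¹ + (C * p) ^ (-(1 / p)) < 1)
    (hineq : ∀ t ∈ Icc t0 T,
      f t ≤ a + (∫ s in t0..t, k1 s * f s) + (∫ s in t0..t, k2 s * f s ^ p) ^ (1 / p)) :
    ∀ t ∈ Icc t0 T, f t < C * a * exp (C * ∫ r in t0..t, (k1 r + k2 r)) := by
  have hw : ContinuousOn (fun r => k1 r + k2 r) (Icc t0 T) := hk1.add hk2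
  refine forall_lt_on_Icc_of_first_crossing hf
    (continuousOn_const.mul (continuousOn_exp_mul_primitive hT hw C)) fun t ht hfg => ?_
  have hsub : Icc t0 t ⊆ Icc t0 T := Icc_subset_Icc_right ht.2
  have hk1t := hk1.mono hsub
  have hk2t := hk2.mono hsub
  have hk1t_nonneg s (hs : s ∈ Icc t0 t) := hk1_nonneg s (hsub hs)
  have hk2t_nonneg s (hs : s ∈ Icc t0 t) := hk2_nonneg s (hsub hs)
  set G := C * a * exp (C * ∫ r in t0..t, (k1 r + k2 r))
  have hG : 0 < G := by positivity
  have hlinear := integral_mul_le_of_le_barrier ht.1 hk1t (hw.mono hsub) (hf.mono hsub)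
    hk1t_nonneg (fun s hs => le_add_of_nonneg_right (hk2t_nonneg s hs)) ha.le hC.le hfg
  have hpower := integral_mul_rpow_le_of_le_barrier ht.1 hk2t (hw.mono hsub) (hf.mono hsub)
    hk2t_nonneg (fun s hs => le_add_of_nonneg_left (hk1t_nonneg s hs))
    (fun s hs => hf_nonneg s (hsub hs)) ha.le hC hp hfg
  have hpower_root : (∫ s in t0..t, k2 s * f s ^ p) ^ (1 / p) ≤ (C * p) ^ (-(1 / p)) * G := by
    calc (∫ s in t0..t, k2 s * f s ^ p) ^ (1 / p) ≤ (G ^ p / (C * p)) ^ (1 / p) :=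
          rpow_le_rpow (intervalIntegral.integral_nonneg ht.1 fun s hs =>
            mul_nonneg (hk2t_nonneg s hs) (rpow_nonneg (hf_nonneg s (hsub hs)) _))
            hpower (by positivity)
      _ = (C * p) ^ (-(1 / p)) * G := by
          rw [div_rpow (by positivity) (by positivity), ← rpow_mul hG.le,
            mul_one_div_cancel hp.ne', rpow_one, rpow_neg (by positivity), div_eq_inv_mul]
  calc f t
      ≤ a + a * (exp (C * ∫ r in t0..t, (k1 r + k2 r)) - 1) + (C * p) ^ (-(1 / p)) * G := by
        have := hineq t ht
        linarith
    _ = G * (C⁻¹ + (C * p) ^ (-(1 / p))) := by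
        simp only [G]
        field_simp
        ring
    _ < G := mul_lt_of_lt_one_right hG hCp

theorem le_barrier_of_integral_ineq {k1 k2 f : ℝ → ℝ} {t0 T a C p : ℝ} (hT : t0 ≤ T)
    (hk1 : ContinuousOn k1 (Icc t0 T)) (hk2 : ContinuousOn k2 (Icc t0 T))
    (hf : ContinuousOn f (Icc t0 T)) (hk1_nonneg : ∀ s ∈ Icc t0 T, 0 ≤ k1 s)
    (hk2_nonneg : ∀ s ∈ Icc t0 T, 0 ≤ k2 s) (hf_nonneg : ∀ s ∈ Icc t0 T, 0 ≤ f s)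
    (ha : 0 ≤ a) (hC : 0 < C) (hp : 0 < p) (hCp : C⁻¹ + (C * p) ^ (-(1 / p)) < 1)
    (hineq : ∀ t ∈ Icc t0 T,
      f t ≤ a + (∫ s in t0..t, k1 s * f s) + (∫ s in t0..t, k2 s * f s ^ p) ^ (1 / p)) :
    ∀ t ∈ Icc t0 T, f t ≤ C * a * exp (C * ∫ r in t0..t, (k1 r + k2 r)) := by
  intro t ht
  set E := exp (C * ∫ r in t0..t, (k1 r + k2 r))
  refine le_of_forall_gt_imp_ge_of_dense fun c hc => ?_
  have hCE : 0 < C * E := by positivity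
  have ha' : a < c / (C * E) := by rw [lt_div_iff₀ hCE]; linarith
  have := lt_barrier_of_integral_ineq hT hk1 hk2 hf hk1_nonneg hk2_nonneg hf_nonneg
    (ha.trans_lt ha') hC hp hCp (fun s hs => (hineq s hs).trans (by gcongr)) t ht
  rw [mul_comm C, mul_assoc, div_mul_cancel₀ _ hCE.ne'] at this
  exact this.le

theorem stmt0_general (t0 : ℝ) (f h1 h2 a b1 b2 : ℝ → ℝ) (p : ℝ) (hp : 1 < p)
    (hf_cont : ContinuousOn f (Ici t0)) (hh1_cont : ContinuousOn h1 (Ici t0))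
    (hh2_cont : ContinuousOn h2 (Ici t0))
    (hf_nonneg : ∀ t ∈ Ici t0, 0 ≤ f t) (hh1_nonneg : ∀ t ∈ Ici t0, 0 ≤ h1 t)
    (hh2_nonneg : ∀ t ∈ Ici t0, 0 ≤ h2 t) (ha_nonneg : ∀ t ∈ Ici t0, 0 ≤ a t)
    (hb1_nonneg : ∀ t ∈ Ici t0, 0 ≤ b1 t) (hb2_nonneg : ∀ t ∈ Ici t0, 0 ≤ b2 t)
    (ha_mono : MonotoneOn a (Ici t0)) (hb1_mono : MonotoneOn b1 (Ici t0))
    (hb2_mono : MonotoneOn b2 (Ici t0))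
    (hmain : ∀ t, t0 ≤ t →
      f t ≤ a t + b1 t * (∫ s in t0..t, h1 s * f s)
        + (b2 t * ∫ s in t0..t, h2 s * (f s) ^ p) ^ (1/p))
    (C6 : ℝ) (hC6 : 0 < C6) (hC6' : C6⁻¹ + (C6 * p) ^ (-(1/p)) < 1) :
    ∀ t, t0 ≤ t →
      f t ≤ C6 * a t *
        Real.exp (C6 * (b1 t * (∫ s in t0..t, h1 s) + b2 t * (∫ s in t0..t, h2 s))) := by
  intro T hT
  have hsub : Icc t0 T ⊆ Ici t0 := Icc_subset_Ici_self
  have hp0 : 0 < p := zero_lt_one.trans hp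
  have hineq_T : ∀ t ∈ Icc t0 T, f t ≤ a T + (∫ s in t0..t, b1 T * h1 s * f s)
      + (∫ s in t0..t, b2 T * h2 s * f s ^ p) ^ (1 / p) := by
    intro t ht
    have hI1 : 0 ≤ ∫ s in t0..t, h1 s * f s := intervalIntegral.integral_nonneg ht.1 fun s hs =>
      mul_nonneg (hh1_nonneg s hs.1) (hf_nonneg s hs.1)
    have hI2 : 0 ≤ ∫ s in t0..t, h2 s * f s ^ p :=
      intervalIntegral.integral_nonneg ht.1 fun s hs =>
        mul_nonneg (hh2_nonneg s hs.1) (rpow_nonneg (hf_nonneg s hs.1) _)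
    simp only [mul_assoc, intervalIntegral.integral_const_mul]
    refine (hmain t ht.1).trans (add_le_add (add_le_add (ha_mono ht.1 hT ht.2)
      (mul_le_mul_of_nonneg_right (hb1_mono ht.1 hT ht.2) hI1))
      (rpow_le_rpow (mul_nonneg (hb2_nonneg t ht.1) hI2)
        (mul_le_mul_of_nonneg_right (hb2_mono ht.1 hT ht.2) hI2) (by positivity)))
  have hk1 : ContinuousOn (fun s => b1 T * h1 s) (Icc t0 T) :=
    continuousOn_const.mul (hh1_cont.mono hsub)
  have hk2 : ContinuousOn (fun s => b2 T * h2 s) (Icc t0 T) :=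
    continuousOn_const.mul (hh2_cont.mono hsub)
  have hbound := le_barrier_of_integral_ineq hT hk1 hk2 (hf_cont.mono hsub)
    (fun s hs => mul_nonneg (hb1_nonneg T hT) (hh1_nonneg s hs.1))
    (fun s hs => mul_nonneg (hb2_nonneg T hT) (hh2_nonneg s hs.1))
    (fun s hs => hf_nonneg s hs.1) (ha_nonneg T hT) hC6 hp0 hC6' hineq_T T ⟨hT, le_rfl⟩
  rwa [intervalIntegral.integral_add (hk1.intervalIntegrable_of_Icc hT)
    (hk2.intervalIntegrable_of_Icc hT), intervalIntegral.integral_const_mul,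
    intervalIntegral.integral_const_mul] at hbound

/-- Nonlinear Grönwall inequality (Lemma B.1): if
`f(t) ≤ a(t) + b₁(t)∫_{t₀}^t h₁ f + (b₂(t)∫_{t₀}^t h₂ f^p)^{1/p}`,
with all functions nonnegative continuous on `[t₀,∞)` and `a, b₁, b₂`
non-decreasing, then for every `C₆` with `C₆⁻¹ + (C₆ p)^{-1/p} < 1`,
`f(t) ≤ C₆ a(t) exp(C₆ (b₁(t)∫h₁ + b₂(t)∫h₂))`. -/
theorem stmt0 (t0 : ℝ) (f h1 h2 a b1 b2 : ℝ → ℝ) (p : ℝ) (hp : 1 < p)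
    (hf_cont : ContinuousOn f (Ici t0)) (hh1_cont : ContinuousOn h1 (Ici t0))
    (hh2_cont : ContinuousOn h2 (Ici t0)) (ha_cont : ContinuousOn a (Ici t0))
    (hb1_cont : ContinuousOn b1 (Ici t0)) (hb2_cont : ContinuousOn b2 (Ici t0))
    (hf_nonneg : ∀ t ∈ Ici t0, 0 ≤ f t) (hh1_nonneg : ∀ t ∈ Ici t0, 0 ≤ h1 t)
    (hh2_nonneg : ∀ t ∈ Ici t0, 0 ≤ h2 t) (ha_nonneg : ∀ t ∈ Ici t0, 0 ≤ a t)
    (hb1_nonneg : ∀ t ∈ Ici t0, 0 ≤ b1 t) (hb2_nonneg : ∀ t ∈ Ici t0, 0 ≤ b2 t)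
    (ha_mono : MonotoneOn a (Ici t0)) (hb1_mono : MonotoneOn b1 (Ici t0))
    (hb2_mono : MonotoneOn b2 (Ici t0))
    (hmain : ∀ t, t0 ≤ t →
      f t ≤ a t + b1 t * (∫ s in t0..t, h1 s * f s)
        + (b2 t * ∫ s in t0..t, h2 s * (f s) ^ p) ^ (1/p))
    (C6 : ℝ) (hC6 : 0 < C6) (hC6' : C6⁻¹ + (C6 * p) ^ (-(1/p)) < 1) :
    ∀ t, t0 ≤ t →
      f t ≤ C6 * a t *
        Real.exp (C6 * (b1 t * (∫ s in t0..t, h1 s) + b2 t * (∫ s in t0..t, h2 s))) :=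
  stmt0_general t0 f h1 h2 a b1 b2 p hp hf_cont hh1_cont hh2_cont hf_nonneg hh1_nonneg hh2_nonneg
    ha_nonneg hb1_nonneg hb2_nonneg ha_mono hb1_mono hb2_mono hmain C6 hC6 hC6'
end

section
/- Let $f(t)$, $g_1(t)$, $g_2(t)$ be positive continuous functions on $[t_0,\infty)$ and $a(t)$ a positive, non-decreasing continuous function there. Suppose that for all $t\geq t_0$, $f(t)\leq a(t)+\int_{t_0}^t\big(g_1(s)+(t-s)^{-1/2}g_2(s)\big)f(s)\,ds$. Then for any $p>2$ there exists a constant $C=C(p)$ such that for all $t\geq t_0$, $f(t)\leq C\,a(t)\exp\Big(C\Big(\int_{t_0}^t g_1(s)\,ds+\|s^{1/2}g_2(s)\|_{L^\infty([t_0,t])}^{p-2}\int_{t_0}^t g_2(s)^2\,ds\Big)\Big)$. -/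
open MeasureTheory Set

/-!
Put `u = f / a`. Let `q` be the conjugate exponent of `p` and `K` a bound for `s^{1/2} g₂(s)` on
`[t₀, t]`. Young's inequality splits the singular kernel as
`(τ - s)^{-1/2} g₂(s) ≤ θ^{-q} s^{q/2-1} (τ - s)^{-q/2} + θ^p K^{p-2} g₂(s)²`.
The first term is a Beta kernel: its mass on any `[t₀, τ]` is at most `B(q/2, 1 - q/2)`, so for
`θ` large its contribution is at most half the running maximum of `u`, and it can be absorbed by
evaluating the inequality where `u` attains that maximum. Since `a` is non-decreasing, what is left
is `u(τ) ≤ 2 + 2 ∫_{t₀}^τ (g₁ + θ^p K^{p-2} g₂²) u`, and the classical Grönwall lemma concludes.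
-/

open Real intervalIntegral

namespace FractionalGronwall

theorem mul_le_rpow_neg_mul_rpow_add {p q a b θ : ℝ} (hpq : p.HolderConjugate q)
    (ha : 0 ≤ a) (hb : 0 ≤ b) (hθ : 0 < θ) :
    a * b ≤ θ ^ (-p) * a ^ p + θ ^ q * b ^ q := by
  calc a * b = (θ⁻¹ * a) * (θ * b) := by field_simp
    _ ≤ (θ⁻¹ * a) ^ p / p + (θ * b) ^ q / q :=
        young_inequality_of_nonneg (by positivity) (by positivity) hpq
    _ ≤ (θ⁻¹ * a) ^ p + (θ * b) ^ q := by
        gcongr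
        · exact div_le_self (by positivity) hpq.lt.le
        · exact div_le_self (by positivity) hpq.symm.lt.le
    _ = θ ^ (-p) * a ^ p + θ ^ q * b ^ q := by
        rw [mul_rpow (by positivity) ha, mul_rpow hθ.le hb, inv_rpow hθ.le, rpow_neg hθ.le]

theorem lt_two_of_holderConjugate {p q : ℝ} (hpq : p.HolderConjugate q) (hp : 2 < p) : q < 2 := by
  rw [hpq.conjugate_eq, div_lt_iff₀ hpq.sub_one_pos]
  linarith

theorem exists_rpow_neg_mul_le_half {q B : ℝ} (hq : 0 < q) (hB : 0 ≤ B) :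
    ∃ θ : ℝ, 0 < θ ∧ θ ^ (-q) * B ≤ 1 / 2 := by
  refine ⟨(2 * B + 1) ^ q⁻¹, by positivity, ?_⟩
  rw [rpow_neg (by positivity), ← rpow_mul (by positivity), inv_mul_cancel₀ hq.ne', rpow_one,
    inv_mul_le_iff₀ (by positivity)]
  linarith

theorem sub_rpow_neg_half_mul_le {p q θ s t g K : ℝ} (hp : 2 ≤ p) (hpq : p.HolderConjugate q)
    (hθ : 0 < θ) (hs : 0 < s) (hst : s < t) (hg : 0 ≤ g) (hK : s ^ ((1:ℝ)/2) * g ≤ K) :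
    (t - s) ^ (-(1/2) : ℝ) * g ≤
      θ ^ (-q) * (s ^ (q / 2 - 1) * (t - s) ^ (-(q / 2))) + θ ^ p * (K ^ (p - 2) * g ^ 2) := by
  have hp0 : 0 < p := hpq.pos
  have hts : 0 < t - s := sub_pos.2 hst
  have hK0 : 0 ≤ K := le_trans (by positivity) hK
  obtain ⟨γ, hγ⟩ : ∃ γ : ℝ, γ = 1 - 2 / p := ⟨_, rfl⟩
  have hγ0 : 0 ≤ γ := by rw [hγ, sub_nonneg, div_le_one hp0]; exact hp
  have hqγ : q * γ = 2 - q := by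
    have := hpq.mul_eq_add
    rw [hγ]
    field_simp
    linarith
  -- split `g = g ^ γ * g ^ (2 / p)` and spend `g ≤ K s^{-1/2}` on the first factor only
  have hsplit : g = g ^ γ * g ^ (2 / p) := by
    rw [← rpow_add' hg (by rw [hγ]; norm_num), hγ, sub_add_cancel, rpow_one]
  have hgK : g ^ γ ≤ K ^ γ * s ^ (-(γ / 2)) := by
    have : g ≤ K * s ^ (-(1/2 : ℝ)) := by
      rw [rpow_neg hs.le, ← div_eq_mul_inv, le_div_iff₀ (by positivity), mul_comm]; exact hK
    calc g ^ γ ≤ (K * s ^ (-(1/2 : ℝ))) ^ γ := rpow_le_rpow hg this hγ0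
      _ = K ^ γ * s ^ (-(γ / 2)) := by rw [mul_rpow hK0 (by positivity), ← rpow_mul hs.le]; ring_nf
  calc (t - s) ^ (-(1/2) : ℝ) * g = (t - s) ^ (-(1/2) : ℝ) * (g ^ γ * g ^ (2 / p)) := by
        rw [← hsplit]
    _ ≤ (t - s) ^ (-(1/2) : ℝ) * (K ^ γ * s ^ (-(γ / 2)) * g ^ (2 / p)) := by gcongr
    _ = ((t - s) ^ (-(1/2) : ℝ) * s ^ (-(γ / 2))) * (K ^ γ * g ^ (2 / p)) := by ring
    _ ≤ θ ^ (-q) * ((t - s) ^ (-(1/2) : ℝ) * s ^ (-(γ / 2))) ^ q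
          + θ ^ p * (K ^ γ * g ^ (2 / p)) ^ p :=
        mul_le_rpow_neg_mul_rpow_add hpq.symm (by positivity) (by positivity) hθ
    _ = _ := by
        rw [mul_rpow (by positivity) (by positivity), mul_rpow (by positivity) (by positivity),
          ← rpow_mul hts.le, ← rpow_mul hs.le, ← rpow_mul hK0, ← rpow_mul hg,
          show -(γ / 2) * q = q / 2 - 1 by linarith, show γ * p = p - 2 by rw [hγ]; field_simp,
          show 2 / p * p = 2 by field_simp, rpow_two]
        ring_nf

theorem intervalIntegrable_sub_rpow {β a t : ℝ} (hβ : -1 < β) :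
    IntervalIntegrable (fun x => (t - x) ^ β) volume a t := by
  simpa using ((intervalIntegrable_rpow' hβ (a := 0) (b := t - a)).comp_sub_left t).symm

theorem intervalIntegrable_rpow_mul_sub_rpow {α β t : ℝ} (hα : -1 < α) (hβ : -1 < β)
    (ht : 0 < t) : IntervalIntegrable (fun x => x ^ α * (t - x) ^ β) volume 0 t := by
  -- each factor is singular at one endpoint only, and continuous near the other
  have left : IntervalIntegrable (fun x => x ^ α * (t - x) ^ β) volume 0 (t / 2) := by
    refine (intervalIntegrable_rpow' hα).mul_continuousOn (ContinuousOn.rpow_const ?_ ?_)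
    · fun_prop
    · intro x hx
      rw [uIcc_of_le (by positivity)] at hx
      left; linarith [hx.2]
  have right : IntervalIntegrable (fun x => x ^ α * (t - x) ^ β) volume (t / 2) t := by
    refine (intervalIntegrable_sub_rpow hβ).continuousOn_mul (ContinuousOn.rpow_const ?_ ?_)
    · fun_prop
    · intro x hx
      rw [uIcc_of_le (by linarith)] at hx
      left; linarith [hx.1]
  exact left.trans right

theorem integral_rpow_mul_sub_rpow {α β t : ℝ} (ht : 0 < t) :
    ∫ x in 0..t, x ^ α * (t - x) ^ β = t ^ (α + β + 1) * ∫ x in 0..1, x ^ α * (1 - x) ^ β := by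
  have hscale : ∀ x ∈ uIcc (0:ℝ) 1, (t * x) ^ α * (t - t * x) ^ β
      = t ^ (α + β) * (x ^ α * (1 - x) ^ β) := by
    intro x hx
    rw [uIcc_of_le zero_le_one] at hx
    rw [show t - t * x = t * (1 - x) by ring, mul_rpow ht.le hx.1,
      mul_rpow ht.le (by linarith [hx.2]), rpow_add ht]
    ring
  have := smul_integral_comp_mul_left (a := 0) (b := 1) (fun x => x ^ α * (t - x) ^ β) t
  rw [mul_zero, mul_one] at this
  rw [← this, integral_congr hscale, intervalIntegral.integral_const_mul, smul_eq_mul,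
    rpow_add_one ht.ne']
  ring

theorem intervalIntegrable_rpow_mul_sub_rpow_mul {r a b : ℝ} {w : ℝ → ℝ} (hr0 : 0 < r)
    (hr1 : r < 1) (ha : 0 ≤ a) (hab : a ≤ b) (hw : ContinuousOn w (Icc a b)) :
    IntervalIntegrable (fun s => s ^ (r - 1) * (b - s) ^ (-r) * w s) volume a b := by
  rcases hab.eq_or_lt with rfl | hab
  · exact IntervalIntegrable.refl
  refine IntervalIntegrable.mul_continuousOn ?_ (by rwa [uIcc_of_le hab.le])
  exact (intervalIntegrable_rpow_mul_sub_rpow (by linarith) (by linarith)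
    (ha.trans_lt hab)).mono_set
    (uIcc_subset_uIcc (by simp [uIcc_of_le (ha.trans hab.le), ha, hab.le]) right_mem_uIcc)

theorem integral_rpow_mul_sub_rpow_mul_le {r a b m : ℝ} {w : ℝ → ℝ} (hr0 : 0 < r) (hr1 : r < 1)
    (ha : 0 ≤ a) (hab : a ≤ b) (hw : ContinuousOn w (Icc a b)) (hwm : ∀ s ∈ Icc a b, w s ≤ m)
    (hm : 0 ≤ m) :
    ∫ s in a..b, s ^ (r - 1) * (b - s) ^ (-r) * w s
      ≤ (∫ x in 0..1, x ^ (r - 1) * (1 - x) ^ (-r)) * m := by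
  have hk0 : ∀ {c : ℝ}, ∀ s ∈ Icc 0 c, 0 ≤ s ^ (r - 1) * (c - s) ^ (-r) := fun s hs =>
    mul_nonneg (rpow_nonneg hs.1 _) (rpow_nonneg (sub_nonneg.2 hs.2) _)
  rcases hab.eq_or_lt with rfl | hab
  · rw [integral_same]
    exact mul_nonneg (integral_nonneg zero_le_one fun s hs => hk0 s hs) hm
  have hk : IntervalIntegrable (fun s => s ^ (r - 1) * (b - s) ^ (-r)) volume 0 b :=
    intervalIntegrable_rpow_mul_sub_rpow (by linarith) (by linarith) (ha.trans_lt hab)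
  calc ∫ s in a..b, s ^ (r - 1) * (b - s) ^ (-r) * w s
      ≤ ∫ s in a..b, s ^ (r - 1) * (b - s) ^ (-r) * m :=
        integral_mono_on hab.le (intervalIntegrable_rpow_mul_sub_rpow_mul hr0 hr1 ha hab.le hw)
          (intervalIntegrable_rpow_mul_sub_rpow_mul hr0 hr1 ha hab.le continuousOn_const)
          fun s hs => mul_le_mul_of_nonneg_left (hwm s hs) (hk0 s ⟨ha.trans hs.1, hs.2⟩)
    _ = (∫ s in a..b, s ^ (r - 1) * (b - s) ^ (-r)) * m := integral_mul_const _ _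
    _ ≤ (∫ s in 0..b, s ^ (r - 1) * (b - s) ^ (-r)) * m := by
        gcongr
        refine integral_mono_interval ha hab.le le_rfl ?_ hk
        filter_upwards [ae_restrict_mem measurableSet_Ioc] with s hs
        exact hk0 s (Ioc_subset_Icc_self hs)
    _ = (∫ x in 0..1, x ^ (r - 1) * (1 - x) ^ (-r)) * m := by
        rw [integral_rpow_mul_sub_rpow (ha.trans_lt hab), show r - 1 + -r + 1 = 0 by ring,
          rpow_zero, one_mul]

theorem hasDerivAt_integral_of_continuousOn {F : ℝ → ℝ} {a b x : ℝ}
    (hF : ContinuousOn F (Icc a b)) (hx : x ∈ Ioo a b) :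
    HasDerivAt (fun y => ∫ t in a..y, F t) (F x) x :=
  integral_hasDerivAt_right
    ((hF.mono (Icc_subset_Icc le_rfl hx.2.le)).intervalIntegrable_of_Icc hx.1.le)
    ((hF.mono Ioo_subset_Icc_self).stronglyMeasurableAtFilter isOpen_Ioo x hx)
    (hF.continuousAt (Icc_mem_nhds hx.1 hx.2))

theorem continuousOn_integral_of_continuousOn {F : ℝ → ℝ} {a b : ℝ}
    (hF : ContinuousOn F (Icc a b)) : ContinuousOn (fun y => ∫ t in a..y, F t) (Icc a b) := by
  rcases le_or_gt a b with hab | hab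
  · have := continuousOn_primitive_interval (μ := volume) (f := F)
      (by rw [uIcc_of_le hab]; exact hF.integrableOn_Icc)
    rwa [uIcc_of_le hab] at this
  · simp [Icc_eq_empty_of_lt hab]

theorem le_mul_exp_integral_of_le_add_integral {u G : ℝ → ℝ} {a b c : ℝ}
    (hu : ContinuousOn u (Icc a b)) (hG : ContinuousOn G (Icc a b))
    (hG0 : ∀ x ∈ Icc a b, 0 ≤ G x) (h : ∀ x ∈ Icc a b, u x ≤ c + ∫ y in a..x, G y * u y) :
    ∀ x ∈ Icc a b, u x ≤ c * exp (∫ y in a..x, G y) := by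
  set ψ := fun x => c + ∫ y in a..x, G y * u y
  have hanti : AntitoneOn (fun x => ψ x * exp (-∫ y in a..x, G y)) (Icc a b) := by
    refine antitoneOn_of_hasDerivWithinAt_nonpos (convex_Icc a b)
      (f' := fun x => G x * (u x - ψ x) * exp (-∫ y in a..x, G y)) ?_ ?_ ?_
    · exact (continuousOn_const.add (continuousOn_integral_of_continuousOn (hG.mul hu))).mul
        (continuousOn_integral_of_continuousOn hG).neg.rexp
    · intro x hx
      rw [interior_Icc] at hx
      have hψ : HasDerivAt ψ (G x * u x) x :=
        (hasDerivAt_integral_of_continuousOn (F := fun t => G t * u t) (hG.mul hu) hx).const_add c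
      have hexp : HasDerivAt (fun y => exp (-∫ t in a..y, G t))
          (exp (-∫ t in a..x, G t) * -G x) x :=
        (hasDerivAt_integral_of_continuousOn hG hx).neg.exp
      exact (hψ.mul hexp).hasDerivWithinAt.congr_deriv (by ring)
    · intro x hx
      rw [interior_Icc] at hx
      have hx' := Ioo_subset_Icc_self hx
      exact mul_nonpos_of_nonpos_of_nonneg
        (mul_nonpos_of_nonneg_of_nonpos (hG0 x hx') (sub_nonpos.2 (h x hx'))) (exp_pos _).le
  intro x hx
  have hΦ := hanti ⟨le_rfl, hx.1.trans hx.2⟩ hx hx.1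
  simp only [ψ, integral_same, add_zero, neg_zero, exp_zero, mul_one] at hΦ
  calc u x ≤ ψ x := h x hx
    _ = ψ x * exp (-∫ y in a..x, G y) * exp (∫ y in a..x, G y) := by
        rw [mul_assoc, ← exp_add, neg_add_cancel, exp_zero, mul_one]
    _ ≤ c * exp (∫ y in a..x, G y) := by gcongr

theorem mul_le_of_le_add_mul_of_forall_le {u A : ℝ → ℝ} {a b ε : ℝ}
    (hu : ContinuousOn u (Icc a b)) (hA : MonotoneOn A (Icc a b)) (hε : ε ≤ 1)
    (h : ∀ x ∈ Icc a b, ∀ m, (∀ y ∈ Icc a x, u y ≤ m) → u x ≤ A x + ε * m) :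
    ∀ x ∈ Icc a b, (1 - ε) * u x ≤ A x := by
  intro x hx
  have hsub : Icc a x ⊆ Icc a b := Icc_subset_Icc_right hx.2
  -- test the hypothesis at a point where `u` is maximal on `[a, x]`
  obtain ⟨y, hy, hmax⟩ := isCompact_Icc.exists_isMaxOn (nonempty_Icc.2 hx.1) (hu.mono hsub)
  have hy' : y ∈ Icc a b := hsub hy
  have := h y hy' (u y) fun z hz => hmax (Icc_subset_Icc_right hy.2 hz)
  calc (1 - ε) * u x ≤ (1 - ε) * u y :=
        mul_le_mul_of_nonneg_left (hmax ⟨hx.1, le_rfl⟩) (by linarith)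
    _ ≤ A y := by linarith
    _ ≤ A x := hA hy' hx hy.2

theorem le_mul_exp_integral_of_le_add_integral_add_mul {u G : ℝ → ℝ} {a b c ε : ℝ}
    (hu : ContinuousOn u (Icc a b)) (hu0 : ∀ x ∈ Icc a b, 0 ≤ u x)
    (hG : ContinuousOn G (Icc a b)) (hG0 : ∀ x ∈ Icc a b, 0 ≤ G x) (hε : ε < 1)
    (h : ∀ x ∈ Icc a b, ∀ m, (∀ y ∈ Icc a x, u y ≤ m) →
      u x ≤ c + (∫ y in a..x, G y * u y) + ε * m) :
    ∀ x ∈ Icc a b, u x ≤ (1 - ε)⁻¹ * c * exp ((1 - ε)⁻¹ * ∫ y in a..x, G y) := by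
  have hGu : ContinuousOn (fun y => G y * u y) (Icc a b) := hG.mul hu
  have hmono : MonotoneOn (fun x => c + ∫ y in a..x, G y * u y) (Icc a b) := by
    intro x hx y hy hxy
    refine add_le_add_right (integral_mono_interval le_rfl hx.1 hxy ?_
      ((hGu.mono (Icc_subset_Icc_right hy.2)).intervalIntegrable_of_Icc (μ := volume) hy.1)) c
    filter_upwards [ae_restrict_mem measurableSet_Ioc] with z hz
    have hz' : z ∈ Icc a b := ⟨hz.1.le, hz.2.trans hy.2⟩
    exact mul_nonneg (hG0 z hz') (hu0 z hz')
  have habs := mul_le_of_le_add_mul_of_forall_le hu hmono hε.le h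
  have hpos : 0 < (1 - ε)⁻¹ := inv_pos.2 (sub_pos.2 hε)
  intro x hx
  rw [← intervalIntegral.integral_const_mul]
  refine le_mul_exp_integral_of_le_add_integral (G := fun y => (1 - ε)⁻¹ * G y) hu
    (continuousOn_const.mul hG)
    (fun y hy => mul_nonneg hpos.le (hG0 y hy)) (fun y hy => ?_) x hx
  simp only [mul_assoc, intervalIntegral.integral_const_mul]
  rw [← mul_add, ← div_le_iff₀' hpos, div_inv_eq_mul, mul_comm]
  exact habs y hy

theorem intervalIntegrable_add_sub_rpow_mul {g1 g2 f : ℝ → ℝ} {a b β : ℝ} (hβ : -1 < β)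
    (hab : a ≤ b) (hg1 : ContinuousOn g1 (Icc a b)) (hg2 : ContinuousOn g2 (Icc a b))
    (hf : ContinuousOn f (Icc a b)) :
    IntervalIntegrable (fun s => (g1 s + (b - s) ^ β * g2 s) * f s) volume a b := by
  have h1 := (hg1.mul hf).intervalIntegrable_of_Icc (μ := volume) hab
  have h2 := (intervalIntegrable_sub_rpow (a := a) (t := b) hβ).mul_continuousOn
    (g := fun s => g2 s * f s) (by rw [uIcc_of_le hab]; exact hg2.mul hf)
  convert h1.add h2 using 1
  funext s
  simp only [Pi.mul_apply]
  ring

theorem integral_add_sub_rpow_mul_le {t0 τ p q θ K : ℝ} {f g1 g2 a : ℝ → ℝ}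
    (ht0 : 0 ≤ t0) (hτ : t0 ≤ τ) (hp : 2 < p) (hpq : p.HolderConjugate q) (hθ : 0 < θ)
    (hf : ContinuousOn f (Icc t0 τ)) (hg1 : ContinuousOn g1 (Icc t0 τ))
    (hg2 : ContinuousOn g2 (Icc t0 τ)) (ha : ContinuousOn a (Icc t0 τ))
    (hf0 : ∀ s ∈ Icc t0 τ, 0 ≤ f s) (hg1_0 : ∀ s ∈ Icc t0 τ, 0 ≤ g1 s)
    (hg2_0 : ∀ s ∈ Icc t0 τ, 0 ≤ g2 s) (ha0 : ∀ s ∈ Icc t0 τ, 0 < a s)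
    (ha_mono : MonotoneOn a (Icc t0 τ)) (hK : ∀ s ∈ Icc t0 τ, s ^ ((1:ℝ)/2) * g2 s ≤ K) :
    ∫ s in t0..τ, (g1 s + (τ - s) ^ (-(1/2) : ℝ) * g2 s) * f s
      ≤ a τ * ((∫ s in t0..τ, (g1 s + θ ^ p * (K ^ (p - 2) * g2 s ^ 2)) * (f s / a s))
        + θ ^ (-q) * ∫ s in t0..τ, s ^ (q / 2 - 1) * (τ - s) ^ (-(q / 2)) * (f s / a s)) := by
  set u := fun s => f s / a s
  set G := fun s => g1 s + θ ^ p * (K ^ (p - 2) * g2 s ^ 2)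
  set k := fun s => s ^ (q / 2 - 1) * (τ - s) ^ (-(q / 2))
  have hq : 0 < q / 2 ∧ q / 2 < 1 :=
    ⟨by linarith [hpq.symm.pos], by linarith [lt_two_of_holderConjugate hpq hp]⟩
  have hu : ContinuousOn u (Icc t0 τ) := hf.div ha fun s hs => (ha0 s hs).ne'
  have hG : ContinuousOn G (Icc t0 τ) :=
    hg1.add (continuousOn_const.mul (continuousOn_const.mul (hg2.pow 2)))
  have hK0 : 0 ≤ K := (mul_nonneg (rpow_nonneg ht0 _) (hg2_0 t0 ⟨le_rfl, hτ⟩)).trans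
    (hK t0 ⟨le_rfl, hτ⟩)
  have hpoint : ∀ s ∈ Ioo t0 τ, (g1 s + (τ - s) ^ (-(1/2) : ℝ) * g2 s) * f s
      ≤ a τ * (G s * u s + θ ^ (-q) * (k s * u s)) := by
    intro s hs
    have hs' : s ∈ Icc t0 τ := Ioo_subset_Icc_self hs
    have hsplit := sub_rpow_neg_half_mul_le hp.le hpq hθ (ht0.trans_lt hs.1) hs.2
      (hg2_0 s hs') (hK s hs')
    have hfs : f s ≤ a τ * u s := by
      calc f s = a s * u s := by simp only [u]; field_simp [(ha0 s hs').ne']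
        _ ≤ a τ * u s := mul_le_mul_of_nonneg_right (ha_mono hs' ⟨hτ, le_rfl⟩ hs.2.le)
          (div_nonneg (hf0 s hs') (ha0 s hs').le)
    have hk0 : 0 ≤ k s := mul_nonneg (rpow_nonneg (ht0.trans hs'.1) _)
      (rpow_nonneg (sub_nonneg.2 hs'.2) _)
    have hG0 : 0 ≤ G s := add_nonneg (hg1_0 s hs') (by positivity)
    calc (g1 s + (τ - s) ^ (-(1/2) : ℝ) * g2 s) * f s ≤ (G s + θ ^ (-q) * k s) * f s :=
          mul_le_mul_of_nonneg_right (by simp only [G, k]; linarith) (hf0 s hs')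
      _ ≤ (G s + θ ^ (-q) * k s) * (a τ * u s) := by gcongr
      _ = a τ * (G s * u s + θ ^ (-q) * (k s * u s)) := by ring
  have hintG : IntervalIntegrable (fun s => G s * u s) volume t0 τ :=
    (hG.mul hu).intervalIntegrable_of_Icc hτ
  have hintk : IntervalIntegrable (fun s => k s * u s) volume t0 τ :=
    intervalIntegrable_rpow_mul_sub_rpow_mul hq.1 hq.2 ht0 hτ hu
  have hint := integral_mono_on_of_le_Ioo hτ
    (intervalIntegrable_add_sub_rpow_mul (by norm_num) hτ hg1 hg2 hf)
    ((hintG.add (hintk.const_mul _)).const_mul (a τ)) hpoint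
  rwa [intervalIntegral.integral_const_mul, integral_add hintG (hintk.const_mul _),
    intervalIntegral.integral_const_mul] at hint

theorem div_le_one_add_integral_add_half {t0 τ p q θ K m : ℝ} {f g1 g2 a : ℝ → ℝ}
    (ht0 : 0 ≤ t0) (hτ : t0 ≤ τ) (hp : 2 < p) (hpq : p.HolderConjugate q) (hθ : 0 < θ)
    (hθB : θ ^ (-q) * ∫ x in 0..1, x ^ (q / 2 - 1) * (1 - x) ^ (-(q / 2)) ≤ 1 / 2)
    (hf : ContinuousOn f (Icc t0 τ)) (hg1 : ContinuousOn g1 (Icc t0 τ))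
    (hg2 : ContinuousOn g2 (Icc t0 τ)) (ha : ContinuousOn a (Icc t0 τ))
    (hf0 : ∀ s ∈ Icc t0 τ, 0 ≤ f s) (hg1_0 : ∀ s ∈ Icc t0 τ, 0 ≤ g1 s)
    (hg2_0 : ∀ s ∈ Icc t0 τ, 0 ≤ g2 s) (ha0 : ∀ s ∈ Icc t0 τ, 0 < a s)
    (ha_mono : MonotoneOn a (Icc t0 τ)) (hK : ∀ s ∈ Icc t0 τ, s ^ ((1:ℝ)/2) * g2 s ≤ K)
    (hfτ : f τ ≤ a τ + ∫ s in t0..τ, (g1 s + (τ - s) ^ (-(1/2) : ℝ) * g2 s) * f s)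
    (hm : ∀ s ∈ Icc t0 τ, f s / a s ≤ m) :
    f τ / a τ ≤ 1 + (∫ s in t0..τ, (g1 s + θ ^ p * (K ^ (p - 2) * g2 s ^ 2)) * (f s / a s))
      + 1 / 2 * m := by
  have hτmem : τ ∈ Icc t0 τ := ⟨hτ, le_rfl⟩
  have hm0 : 0 ≤ m := (div_nonneg (hf0 t0 ⟨le_rfl, hτ⟩) (ha0 t0 ⟨le_rfl, hτ⟩).le).trans
    (hm t0 ⟨le_rfl, hτ⟩)
  have hq : 0 < q / 2 ∧ q / 2 < 1 :=
    ⟨by linarith [hpq.symm.pos], by linarith [lt_two_of_holderConjugate hpq hp]⟩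
  have hsmall : θ ^ (-q) * ∫ s in t0..τ, s ^ (q / 2 - 1) * (τ - s) ^ (-(q / 2)) * (f s / a s)
      ≤ 1 / 2 * m :=
    calc _ ≤ θ ^ (-q) * ((∫ x in 0..1, x ^ (q / 2 - 1) * (1 - x) ^ (-(q / 2))) * m) := by
          gcongr
          exact integral_rpow_mul_sub_rpow_mul_le hq.1 hq.2 ht0 hτ
            (hf.div ha fun s hs => (ha0 s hs).ne') hm hm0
      _ ≤ 1 / 2 * m := by rw [← mul_assoc]; exact mul_le_mul_of_nonneg_right hθB hm0
  have hint := integral_add_sub_rpow_mul_le ht0 hτ hp hpq hθ hf hg1 hg2 ha hf0 hg1_0 hg2_0 ha0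
    ha_mono hK
  rw [div_le_iff₀ (ha0 τ hτmem)]
  linear_combination hfτ + hint + mul_le_mul_of_nonneg_left hsmall (ha0 τ hτmem).le

theorem le_two_mul_mul_exp_of_le_add_integral {t0 t p q θ K : ℝ} {f g1 g2 a : ℝ → ℝ}
    (ht0 : 0 ≤ t0) (ht : t0 ≤ t) (hp : 2 < p) (hpq : p.HolderConjugate q) (hθ : 0 < θ)
    (hθB : θ ^ (-q) * ∫ x in 0..1, x ^ (q / 2 - 1) * (1 - x) ^ (-(q / 2)) ≤ 1 / 2)
    (hf : ContinuousOn f (Icc t0 t)) (hg1 : ContinuousOn g1 (Icc t0 t))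
    (hg2 : ContinuousOn g2 (Icc t0 t)) (ha : ContinuousOn a (Icc t0 t))
    (hf0 : ∀ s ∈ Icc t0 t, 0 ≤ f s) (hg1_0 : ∀ s ∈ Icc t0 t, 0 ≤ g1 s)
    (hg2_0 : ∀ s ∈ Icc t0 t, 0 ≤ g2 s) (ha0 : ∀ s ∈ Icc t0 t, 0 < a s)
    (ha_mono : MonotoneOn a (Icc t0 t)) (hK : ∀ s ∈ Icc t0 t, s ^ ((1:ℝ)/2) * g2 s ≤ K)
    (hmain : ∀ τ ∈ Icc t0 t,
      f τ ≤ a τ + ∫ s in t0..τ, (g1 s + (τ - s) ^ (-(1/2) : ℝ) * g2 s) * f s) :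
    f t ≤ 2 * a t * exp (2 * ((∫ s in t0..t, g1 s)
      + θ ^ p * (K ^ (p - 2) * ∫ s in t0..t, g2 s ^ 2))) := by
  have hK0 : 0 ≤ K := (mul_nonneg (rpow_nonneg ht0 _) (hg2_0 t0 ⟨le_rfl, ht⟩)).trans
    (hK t0 ⟨le_rfl, ht⟩)
  have hg2' : ContinuousOn (fun s => θ ^ p * (K ^ (p - 2) * g2 s ^ 2)) (Icc t0 t) :=
    continuousOn_const.mul (continuousOn_const.mul (hg2.pow 2))
  have hstep : ∀ τ ∈ Icc t0 t, ∀ m, (∀ s ∈ Icc t0 τ, f s / a s ≤ m) → f τ / a τ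
      ≤ 1 + (∫ s in t0..τ, (g1 s + θ ^ p * (K ^ (p - 2) * g2 s ^ 2)) * (f s / a s)) + 1 / 2 * m :=
    fun τ hτ m hm =>
      have hsub : Icc t0 τ ⊆ Icc t0 t := Icc_subset_Icc_right hτ.2
      div_le_one_add_integral_add_half ht0 hτ.1 hp hpq hθ hθB (hf.mono hsub) (hg1.mono hsub)
        (hg2.mono hsub) (ha.mono hsub) (fun s hs => hf0 s (hsub hs))
        (fun s hs => hg1_0 s (hsub hs)) (fun s hs => hg2_0 s (hsub hs))
        (fun s hs => ha0 s (hsub hs)) (ha_mono.mono hsub) (fun s hs => hK s (hsub hs))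
        (hmain τ hτ) hm
  have hbound := le_mul_exp_integral_of_le_add_integral_add_mul (u := fun s => f s / a s)
    (G := fun s => g1 s + θ ^ p * (K ^ (p - 2) * g2 s ^ 2)) (hf.div ha fun s hs => (ha0 s hs).ne')
    (fun s hs => div_nonneg (hf0 s hs) (ha0 s hs).le)
    (hg1.add hg2') (fun s hs => add_nonneg (hg1_0 s hs) (by positivity)) (by norm_num) hstep
    t ⟨ht, le_rfl⟩
  rw [integral_add (hg1.intervalIntegrable_of_Icc ht) (hg2'.intervalIntegrable_of_Icc ht),
    intervalIntegral.integral_const_mul, intervalIntegral.integral_const_mul,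
    div_le_iff₀ (ha0 t ⟨ht, le_rfl⟩)] at hbound
  norm_num at hbound
  linarith

end FractionalGronwall

open FractionalGronwall

/-- Fractional Grönwall inequality (Lemma B.3): if
`f(t) ≤ a(t) + ∫_{t₀}^t (g₁(s) + (t-s)^{-1/2} g₂(s)) f(s) ds`
with all functions positive continuous on `[t₀,∞)` and `a` non-decreasing,
then for any `p > 2` there is `C = C(p)` with
`f(t) ≤ C a(t) exp(C (∫ g₁ + ‖s^{1/2} g₂‖_{L^∞([t₀,t])}^{p-2} ∫ g₂²))`. -/
theorem stmt2 (t0 : ℝ) (ht0 : 0 ≤ t0) (f g1 g2 a : ℝ → ℝ) (p : ℝ) (hp : 2 < p)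
    (hf_cont : ContinuousOn f (Ici t0)) (hg1_cont : ContinuousOn g1 (Ici t0))
    (hg2_cont : ContinuousOn g2 (Ici t0)) (ha_cont : ContinuousOn a (Ici t0))
    (hf_pos : ∀ t ∈ Ici t0, 0 < f t) (hg1_pos : ∀ t ∈ Ici t0, 0 < g1 t)
    (hg2_pos : ∀ t ∈ Ici t0, 0 < g2 t) (ha_pos : ∀ t ∈ Ici t0, 0 < a t)
    (ha_mono : MonotoneOn a (Ici t0))
    (hmain : ∀ t, t0 ≤ t →
      f t ≤ a t + ∫ s in t0..t, (g1 s + (t - s) ^ (-(1/2) : ℝ) * g2 s) * f s) :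
    ∃ C : ℝ, 0 < C ∧ ∀ t, t0 ≤ t →
      f t ≤ C * a t * Real.exp (C * ((∫ s in t0..t, g1 s)
        + (sSup ((fun s => s ^ ((1:ℝ)/2) * g2 s) '' Icc t0 t)) ^ (p - 2)
          * ∫ s in t0..t, (g2 s) ^ 2)) := by
  have hpq := Real.HolderConjugate.conjExponent (show 1 < p by linarith)
  set q := p.conjExponent
  set B := ∫ x in 0..1, x ^ (q / 2 - 1) * (1 - x) ^ (-(q / 2))
  have hB : 0 ≤ B := integral_nonneg zero_le_one fun x hx =>
    mul_nonneg (rpow_nonneg hx.1 _) (rpow_nonneg (sub_nonneg.2 hx.2) _)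
  obtain ⟨θ, hθ, hθB⟩ := exists_rpow_neg_mul_le_half hpq.symm.pos hB
  refine ⟨2 * (1 + θ ^ p), by positivity, fun t ht => ?_⟩
  have hsub : Icc t0 t ⊆ Ici t0 := Icc_subset_Ici_self
  set K := sSup ((fun s => s ^ ((1:ℝ)/2) * g2 s) '' Icc t0 t)
  have hK : ∀ s ∈ Icc t0 t, s ^ ((1:ℝ)/2) * g2 s ≤ K := fun s hs =>
    le_csSup (isCompact_Icc.image_of_continuousOn ((continuousOn_id.rpow_const fun _ _ =>
      Or.inr (by norm_num)).mul (hg2_cont.mono hsub))).bddAbove (mem_image_of_mem _ hs)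
  have hI1 : 0 ≤ ∫ s in t0..t, g1 s := integral_nonneg ht fun s hs => (hg1_pos s hs.1).le
  have hI2 : 0 ≤ K ^ (p - 2) * ∫ s in t0..t, g2 s ^ 2 :=
    mul_nonneg (rpow_nonneg ((mul_nonneg (rpow_nonneg ht0 _) (hg2_pos t0 self_mem_Ici).le).trans
      (hK t0 ⟨le_rfl, ht⟩)) _) (integral_nonneg ht fun s _ => sq_nonneg _)
  calc f t ≤ 2 * a t * exp (2 * ((∫ s in t0..t, g1 s)
        + θ ^ p * (K ^ (p - 2) * ∫ s in t0..t, g2 s ^ 2))) :=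
        le_two_mul_mul_exp_of_le_add_integral ht0 ht hp hpq hθ hθB (hf_cont.mono hsub)
          (hg1_cont.mono hsub) (hg2_cont.mono hsub) (ha_cont.mono hsub)
          (fun s hs => (hf_pos s hs.1).le) (fun s hs => (hg1_pos s hs.1).le)
          (fun s hs => (hg2_pos s hs.1).le) (fun s hs => ha_pos s hs.1) (ha_mono.mono hsub) hK
          fun τ hτ => hmain τ hτ.1
    _ ≤ 2 * (1 + θ ^ p) * a t * exp (2 * (1 + θ ^ p) * ((∫ s in t0..t, g1 s)
        + K ^ (p - 2) * ∫ s in t0..t, g2 s ^ 2)) := by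
      have hθp : 0 ≤ θ ^ p := by positivity
      have := (ha_pos t ht).le
      gcongr ?_ * _ * rexp ?_
      · linarith
      · nlinarith [mul_nonneg hθp hI1, mul_nonneg hθp hI2]
end

section
/- There exist $c_0>0$, vectors $\theta_1,\ldots,\theta_6\in\mathbb{Z}^3$, and smooth functions $\Gamma_1,\ldots,\Gamma_6: B\to\mathbb{R}$, where $B$ is the closed ball of radius $c_0$ about the identity in the space of $3\times 3$ real symmetric matrices (with Frobenius norm), such that $M=\sum_{j=1}^6 \Gamma_j(M)^2\,\theta_j\otimes\theta_j$ for all $M\in B$, and moreover $1/100\leq\Gamma_j(M)\leq 1$ for all $M\in B$ and each $j$. -/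
/-- Frobenius distance of a symmetric `3×3` matrix (given as `Fin 3 → Fin 3 → ℝ`)
to the identity. -/
noncomputable def frobDistId (M : Fin 3 → Fin 3 → ℝ) : ℝ :=
  Real.sqrt (∑ i : Fin 3, ∑ k : Fin 3, (M i k - (if i = k then 1 else 0)) ^ 2)

/-!
The six rank-one matrices `θ_j ⊗ θ_j` form a basis of the symmetric `3×3` matrices, so every
symmetric `M` is `∑ L_j(M) θ_j ⊗ θ_j` with linear coordinate functionals `L_j`. At the identity
these coordinates are `1/3, 1/12, 1/6, 1/6, 1/12, 1/6`, all positive, and each `L_j` moves by at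
most a small multiple of the entrywise distance to the identity. On a small enough ball the `L_j`
therefore stay in `[1/10000, 1]`, and `Γ_j = √L_j` is smooth with values in `[1/100, 1]`.
-/

def nashTheta (j : Fin 6) : Fin 3 → ℤ :=
  match j with
  | 0 => ![0, 0, 1]
  | 1 => ![2, 0, 1]
  | 2 => ![1, 1, 1]
  | 3 => ![-1, 1, 1]
  | 4 => ![-2, 0, 1]
  | 5 => ![0, -2, 1]

/-- The coordinates of a symmetric matrix in the basis `nashTheta j ⊗ nashTheta j`. -/
noncomputable def nashCoeff (j : Fin 6) (M : Fin 3 → Fin 3 → ℝ) : ℝ :=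
  match j with
  | 0 => M 2 2 - M 0 0 / 4 - (5 / 12) * M 1 1 - M 1 2 / 3
  | 1 => (M 0 0 - (M 1 1 + 2 * M 1 2) / 3) / 8 + (M 0 2 - M 0 1) / 4
  | 2 => ((M 1 1 + 2 * M 1 2) / 3 + M 0 1) / 2
  | 3 => ((M 1 1 + 2 * M 1 2) / 3 - M 0 1) / 2
  | 4 => (M 0 0 - (M 1 1 + 2 * M 1 2) / 3) / 8 - (M 0 2 - M 0 1) / 4
  | 5 => (M 1 1 - M 1 2) / 6

lemma contDiff_nashCoeff (j : Fin 6) : ContDiff ℝ (⊤ : ℕ∞) (nashCoeff j) := by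
  fin_cases j <;> unfold nashCoeff <;> fun_prop

lemma sum_nashCoeff_mul_nashTheta {M : Fin 3 → Fin 3 → ℝ} (hM : ∀ i k, M i k = M k i)
    (i k : Fin 3) :
    M i k = ∑ j : Fin 6, nashCoeff j M * (nashTheta j i : ℝ) * (nashTheta j k : ℝ) := by
  rw [Fin.sum_univ_six]
  fin_cases i <;> fin_cases k <;> simp [nashCoeff, nashTheta] <;>
    linarith [hM 1 0, hM 2 0, hM 2 1]

lemma abs_sub_id_apply_le_frobDistId (M : Fin 3 → Fin 3 → ℝ) (i k : Fin 3) :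
    |M i k - (if i = k then 1 else 0)| ≤ frobDistId M := by
  set d : Fin 3 → Fin 3 → ℝ := fun i k => (M i k - (if i = k then 1 else 0)) ^ 2
  have hd : ∀ i k, 0 ≤ d i k := fun _ _ => sq_nonneg _
  refine Real.abs_le_sqrt ?_
  calc d i k ≤ ∑ k', d i k' :=
        Finset.single_le_sum (f := d i) (fun _ _ => hd i _) (Finset.mem_univ k)
    _ ≤ ∑ i', ∑ k', d i' k' :=
      Finset.single_le_sum (f := fun i' => ∑ k', d i' k')
        (fun _ _ => Finset.sum_nonneg fun _ _ => hd _ _) (Finset.mem_univ i)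

lemma nashCoeff_mem_Icc {M : Fin 3 → Fin 3 → ℝ} (hM : frobDistId M ≤ 1 / 1000) (j : Fin 6) :
    nashCoeff j M ∈ Set.Icc (1 / 10000) 1 := by
  have h i k := abs_le.mp ((abs_sub_id_apply_le_frobDistId M i k).trans hM)
  have h00 := h 0 0
  have h01 := h 0 1
  have h02 := h 0 2
  have h11 := h 1 1
  have h12 := h 1 2
  have h22 := h 2 2
  simp only [Fin.reduceEq, if_true, if_false] at h00 h01 h02 h11 h12 h22
  fin_cases j <;> constructor <;> simp only [nashCoeff] <;> linarith

/-- Nash decomposition lemma: there exist `c₀ > 0`, integer vectors `θ₁,…,θ₆ ∈ ℤ³`,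
and smooth functions `Γ₁,…,Γ₆` on the closed Frobenius ball `B` of radius `c₀`
about the identity in the symmetric `3×3` matrices such that
`M = ∑_j Γ_j(M)² θ_j ⊗ θ_j` and `1/100 ≤ Γ_j(M) ≤ 1` for all `M ∈ B`. -/
theorem stmt3 :
    ∃ c0 : ℝ, 0 < c0 ∧
    ∃ θ : Fin 6 → Fin 3 → ℤ,
    ∃ Γ : Fin 6 → (Fin 3 → Fin 3 → ℝ) → ℝ,
      (∀ j, ContDiffOn ℝ (⊤ : ℕ∞) (Γ j)
          {M : Fin 3 → Fin 3 → ℝ | (∀ i k, M i k = M k i) ∧ frobDistId M ≤ c0}) ∧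
      ∀ M : Fin 3 → Fin 3 → ℝ, (∀ i k, M i k = M k i) → frobDistId M ≤ c0 →
        (∀ i k, M i k = ∑ j : Fin 6, (Γ j M) ^ 2 * (θ j i : ℝ) * (θ j k : ℝ))
        ∧ ∀ j, 1/100 ≤ Γ j M ∧ Γ j M ≤ 1 := by
  refine ⟨1 / 1000, by norm_num, nashTheta, fun j M => √(nashCoeff j M), ?_, ?_⟩
  · intro j
    refine (contDiff_nashCoeff j).contDiffOn.sqrt fun M hM => ?_
    exact (lt_of_lt_of_le (by norm_num) (nashCoeff_mem_Icc hM.2 j).1).ne'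
  · intro M hsymm hM
    have hnonneg j : 0 ≤ nashCoeff j M := (nashCoeff_mem_Icc hM j).1.trans' (by norm_num)
    refine ⟨fun i k => ?_, fun j => ⟨?_, Real.sqrt_le_one.mpr (nashCoeff_mem_Icc hM j).2⟩⟩
    · simpa only [Real.sq_sqrt (hnonneg _)] using sum_nashCoeff_mul_nashTheta hsymm i k
    · rw [Real.le_sqrt (by norm_num) (hnonneg j)]
      exact (nashCoeff_mem_Icc hM j).1.trans' (by norm_num)
end
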